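/- Let π : P → H be a surjective morphism of Hopf algebras over a field k, Δ_R := (id ⊗ π) ∘ Δ_P, M := { x ∈ P : Δ_R(x) = x ⊗ 1 }, and V := M ∩ ker ε_P. Then the k-linear map Δ_V(v) := Σ v₍₂₎ ⊗ π(S(v₍₁₎)) maps V into V ⊗ H, and it makes V a right H-comodule: (Δ_V ⊗ id) ∘ Δ_V = (id ⊗ Δ_H) ∘ Δ_V and (id ⊗ ε_H) ∘ Δ_V = id on V. -/

import Mathlib

/-!
In the convolution monoid `Hom(A, A ⊗ A)` of a Hopf algebra the comultiplication factors as
`δ = ι₁ * ι₂` through the two tensor inclusions. These are algebra maps, so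
`(ι₁ ∘ S) * ι₁ = ι₁ ∘ (S * id) = 1` and likewise for `ι₂`; hence `(ι₂ ∘ S) * (ι₁ ∘ S)` is a left
inverse of `δ`. As `δ ∘ S` is a right inverse, `δ (S a) = Σ S a₂ ⊗ S a₁`. Given this, the two
comodule identities for `Δ_V(v) = Σ v₂ ⊗ π(S v₁)` are coassociativity and counitality of `Δ_P`.

For `v ∈ V`, applying `Δ_P ⊗ id` to `Σ v₁ ⊗ π v₂ = v ⊗ 1` and using coassociativity shows that
`Δ_V(v)` is killed by `(Δ_R - (· ⊗ 1)) ⊗ id`. Applying `μ ∘ (π S ⊗ id)` instead gives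
`π(S v) = Σ π(S v₁) π(v₂) = ε(v) 1 = 0`, so `Δ_V(v)` is also killed by `ε ⊗ id`. Since `H` is flat
over `k`, `V ⊗ H` is exactly the common kernel of these two maps on `P ⊗ H`.
-/

open TensorProduct

noncomputable section

variable {k P H : Type*} [Field k] [Ring P] [Ring H] [HopfAlgebra k P] [HopfAlgebra k H]

/-- The right coaction `Δ_R = (id ⊗ π) ∘ Δ_P : P → P ⊗ H`. -/
noncomputable def deltaR (π : P →ₐc[k] H) : P →ₗ[k] P ⊗[k] H :=
  LinearMap.lTensor P π.toLinearMap ∘ₗ Coalgebra.comul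

/-- The coinvariant subspace `M = {x ∈ P : Δ_R(x) = x ⊗ 1}` as a submodule. -/
noncomputable def coinvSub (π : P →ₐc[k] H) : Submodule k P :=
  LinearMap.ker (deltaR π - (TensorProduct.mk k P H).flip 1)

/-- `V = M ∩ ker ε_P`. -/
noncomputable def Vsub (π : P →ₐc[k] H) : Submodule k P :=
  coinvSub π ⊓ LinearMap.ker (Coalgebra.counit (R := k) (A := P))

/-- `Δ_V(v) = Σ v₍₂₎ ⊗ π(S(v₍₁₎))`, as a map defined on all of `P`. -/
noncomputable def deltaV (π : P →ₐc[k] H) : P →ₗ[k] P ⊗[k] H :=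
  (TensorProduct.comm k H P).toLinearMap
    ∘ₗ (π.toLinearMap ∘ₗ HopfAlgebra.antipode (R := k) (A := P)).rTensor P
    ∘ₗ Coalgebra.comul

open Coalgebra HopfAlgebra WithConv
open Algebra.TensorProduct (includeLeft includeRight)

theorem Module.Flat.mem_range_rTensor_subtype_ker_inf_ker {R M N N' Q : Type*}
    [CommRing R] [AddCommGroup M] [Module R M] [AddCommGroup N] [Module R N] [AddCommGroup N']
    [Module R N'] [AddCommGroup Q] [Module R Q] [Module.Flat R Q] (f : M →ₗ[R] N)
    (g : M →ₗ[R] N') {x : M ⊗[R] Q} (hf : f.rTensor Q x = 0) (hg : g.rTensor Q x = 0) :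
    x ∈ LinearMap.range ((LinearMap.ker f ⊓ LinearMap.ker g).subtype.rTensor Q) := by
  have hexact := Module.Flat.rTensor_exact Q (LinearMap.exact_subtype_ker_map (f.prod g))
  rw [LinearMap.ker_prod] at hexact
  have hprod : (TensorProduct.prodLeft R R N N' Q).toLinearMap ∘ₗ (f.prod g).rTensor Q
      = (f.rTensor Q).prod (g.rTensor Q) :=
    TensorProduct.ext' fun _ _ ↦ rfl
  refine (hexact x).mp ?_
  rw [← (TensorProduct.prodLeft R R N N' Q).map_eq_zero_iff, ← LinearEquiv.coe_coe,
    ← LinearMap.comp_apply, hprod, LinearMap.prod_apply, Function.prod, hf, hg,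
    Prod.mk_zero_zero]

section Antipode

variable {R A : Type*} [CommSemiring R]

local notation "ι₁" => AlgHom.toLinearMap (includeLeft : A →ₐ[R] A ⊗[R] A)
local notation "ι₂" => AlgHom.toLinearMap (includeRight : A →ₐ[R] A ⊗[R] A)

theorem Coalgebra.toConv_comul_eq_includeLeft_mul_includeRight [Semiring A] [Algebra R A]
    [CoalgebraStruct R A] : toConv (comul : A →ₗ[R] A ⊗[R] A) = toConv ι₁ * toConv ι₂ := by
  ext a
  rw [(ℛ R a).convMul_apply]
  simp [← (ℛ R a).eq]

namespace HopfAlgebra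

variable [Semiring A] [HopfAlgebra R A]

theorem algHom_comp_antipode_mul_algHom {B : Type*} [Semiring B] [Algebra R B]
    (g : A →ₐ[R] B) : toConv (g.toLinearMap ∘ₗ antipode R) * toConv g.toLinearMap = 1 := by
  ext a
  rw [(ℛ R a).convMul_apply]
  simp [← map_mul, ← map_sum, sum_antipode_mul_eq_algebraMap_counit]

theorem includeRight_antipode_mul_includeLeft_antipode_mul_comul :
    toConv (ι₂ ∘ₗ antipode R) * toConv (ι₁ ∘ₗ antipode R) * toConv (comul : A →ₗ[R] A ⊗[R] A)
      = 1 := by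
  rw [toConv_comul_eq_includeLeft_mul_includeRight, ← mul_assoc, mul_assoc _ _ (toConv ι₁),
    algHom_comp_antipode_mul_algHom, mul_one, algHom_comp_antipode_mul_algHom]

theorem toConv_comul_comp_antipode :
    toConv (comul ∘ₗ antipode R) = toConv (ι₂ ∘ₗ antipode R) * toConv (ι₁ ∘ₗ antipode R) :=
  (left_inv_eq_right_inv includeRight_antipode_mul_includeLeft_antipode_mul_comul
    LinearMap.comul_right_inv).symm

theorem _root_.Coalgebra.Repr.comul_antipode {a : A} {ι : Type*} (𝓡 : Repr R a ι) :
    comul (antipode R a)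
      = ∑ i ∈ 𝓡.index, antipode R (𝓡.right i) ⊗ₜ[R] antipode R (𝓡.left i) := by
  rw [← LinearMap.comp_apply, ← ofConv_toConv (comul ∘ₗ antipode R), toConv_comul_comp_antipode,
    𝓡.convMul_apply]
  simp

end HopfAlgebra

end Antipode

section Coaction

variable (π : P →ₐc[k] H)

theorem deltaV_eq_sum {x : P} {ι : Type*} (𝓡 : Repr k x ι) :
    deltaV π x = ∑ i ∈ 𝓡.index, 𝓡.right i ⊗ₜ[k] π (antipode k (𝓡.left i)) := by
  simp [deltaV, ← 𝓡.eq, BialgHom.toCoalgHom_apply]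

theorem rid_lTensor_counit_deltaV (x : P) :
    TensorProduct.rid k P ((counit (R := k) (A := H)).lTensor P (deltaV π x)) = x := by
  simp [deltaV_eq_sum π (ℛ k x), sum_counit_smul]

theorem assoc_rTensor_deltaV_deltaV (x : P) :
    TensorProduct.assoc k P H H ((deltaV π).rTensor H (deltaV π x))
      = (comul (R := k) (A := H)).lTensor P (deltaV π x) := by
  let f := π.toLinearMap ∘ₗ antipode k
  -- coassociativity, pushed through `a ⊗ (b ⊗ c) ↦ c ⊗ (f b ⊗ f a)`
  have hcoassoc := congr((LinearMap.lTensor P (map f f) ∘ₗ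
    (TensorProduct.assoc k P P P).toLinearMap ∘ₗ (TensorProduct.comm k P (P ⊗[k] P)).toLinearMap ∘ₗ
      LinearMap.lTensor P (TensorProduct.comm k P P).toLinearMap)
    $(sum_tmul_tmul_eq (ℛ k x) (fun _ ↦ ℛ k _) (fun _ ↦ ℛ k _)))
  simp only [CoalgHom.toLinearMap_eq_coe, map_sum, LinearMap.coe_comp, LinearEquiv.coe_coe,
    Function.comp_apply, LinearMap.lTensor_tmul, comm_tmul, assoc_tmul, map_tmul,
    LinearMap.coe_coe, BialgHom.toCoalgHom_apply, f] at hcoassoc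
  simpa only [deltaV_eq_sum π (ℛ k _), map_sum, LinearMap.rTensor_tmul, sum_tmul, assoc_tmul,
    LinearMap.lTensor_tmul, ← CoalgHomClass.map_comp_comul_apply π, (ℛ k _).comul_antipode,
    map_tmul, LinearMap.coe_coe, tmul_sum] using hcoassoc.symm

theorem mem_coinvSub_iff {x : P} : x ∈ coinvSub π ↔ deltaR π x = x ⊗ₜ 1 :=
  LinearMap.mem_ker.trans sub_eq_zero

theorem map_antipode_of_mem_coinvSub {x : P} (hx : x ∈ coinvSub π) :
    π (antipode k x) = algebraMap k H (counit x) := by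
  calc π (antipode k x)
      = LinearMap.mul' k H ((π.toLinearMap ∘ₗ antipode k).rTensor H (deltaR π x)) := by
        simp [(mem_coinvSub_iff π).mp hx, BialgHom.toCoalgHom_apply]
    _ = (toConv ((π : P →ₐ[k] H).toLinearMap ∘ₗ antipode k) *
          toConv (π : P →ₐ[k] H).toLinearMap) x := by
        rw [LinearMap.convMul_apply, ← LinearMap.rTensor_comp_lTensor]
        rfl
    _ = algebraMap k H (counit x) := by
        rw [algHom_comp_antipode_mul_algHom]
        rfl

theorem rTensor_counit_deltaV (x : P) :
    (counit (R := k) (A := P)).rTensor H (deltaV π x) = 1 ⊗ₜ π (antipode k x) := by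
  have h := congr(TensorProduct.comm k H k
    ((π.toLinearMap ∘ₗ antipode k).rTensor k $(sum_tmul_counit_eq (ℛ k x))))
  rw [deltaV_eq_sum π (ℛ k x), map_sum]
  simp only [map_sum, LinearMap.rTensor_tmul, TensorProduct.comm_tmul, LinearMap.comp_apply] at h
  exact h

theorem rTensor_deltaR_deltaV_of_mem_coinvSub {x : P} (hx : x ∈ coinvSub π) :
    (deltaR π).rTensor H (deltaV π x)
      = ((TensorProduct.mk k P H).flip 1).rTensor H (deltaV π x) := by
  let f := π.toLinearMap ∘ₗ antipode k
  -- coassociativity, pushed through `a ⊗ (b ⊗ c) ↦ (b ⊗ π c) ⊗ f a`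
  have hcoassoc := congr(((TensorProduct.comm k H (P ⊗[k] H)).toLinearMap ∘ₗ
    map f (π.toLinearMap.lTensor P)) $(sum_tmul_tmul_eq (ℛ k x) (fun _ ↦ ℛ k _) (fun _ ↦ ℛ k _)))
  have hcoinv := congr(((TensorProduct.comm k H (P ⊗[k] H)).toLinearMap ∘ₗ
    f.rTensor (P ⊗[k] H) ∘ₗ (TensorProduct.assoc k P P H).toLinearMap ∘ₗ comul.rTensor H)
    $((mem_coinvSub_iff π).mp hx))
  have hδ (y : P) : comul y = ∑ i ∈ (ℛ k y).index, (ℛ k y).left i ⊗ₜ[k] (ℛ k y).right i :=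
    (ℛ k y).eq.symm
  simp only [CoalgHom.toLinearMap_eq_coe, map_sum, LinearMap.coe_comp, LinearEquiv.coe_coe,
    Function.comp_apply, map_tmul, LinearMap.coe_coe, BialgHom.toCoalgHom_apply,
    LinearMap.lTensor_tmul, comm_tmul, deltaR, hδ, LinearMap.rTensor_tmul, sum_tmul, assoc_tmul,
    f] at hcoassoc hcoinv
  simp only [deltaR, CoalgHom.toLinearMap_eq_coe, deltaV_eq_sum π (ℛ k _), map_sum,
    LinearMap.rTensor_tmul, LinearMap.coe_comp, Function.comp_apply, hδ, LinearMap.lTensor_tmul,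
    LinearMap.coe_coe, BialgHom.toCoalgHom_apply, sum_tmul, LinearMap.flip_apply, mk_apply]
  exact hcoassoc.symm.trans hcoinv

theorem deltaV_mem_range_rTensor_subtype {v : P} (hv : v ∈ Vsub π) :
    deltaV π v ∈ LinearMap.range ((Vsub π).subtype.rTensor H) := by
  obtain ⟨hM, hε⟩ := Submodule.mem_inf.mp hv
  apply Module.Flat.mem_range_rTensor_subtype_ker_inf_ker
  · rw [LinearMap.rTensor_sub, LinearMap.sub_apply, sub_eq_zero]
    exact rTensor_deltaR_deltaV_of_mem_coinvSub π hM
  · rw [rTensor_counit_deltaV, map_antipode_of_mem_coinvSub π hM, LinearMap.mem_ker.mp hε,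
      map_zero, tmul_zero]

end Coaction

theorem statement12_general (π : P →ₐc[k] H) :
    (∀ v ∈ Vsub π, deltaV π v ∈ LinearMap.range (LinearMap.rTensor H (Vsub π).subtype))
    ∧ (∀ v ∈ Vsub π,
        (TensorProduct.assoc k P H H) ((deltaV π).rTensor H (deltaV π v))
          = (Coalgebra.comul (R := k) (A := H)).lTensor P (deltaV π v))
    ∧ (∀ v ∈ Vsub π,
        (TensorProduct.rid k P)
          ((Coalgebra.counit (R := k) (A := H)).lTensor P (deltaV π v)) = v) :=
  ⟨fun _ hv ↦ deltaV_mem_range_rTensor_subtype π hv, fun v _ ↦ assoc_rTensor_deltaV_deltaV π v,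
    fun v _ ↦ rid_lTensor_counit_deltaV π v⟩

/-- `Δ_V(v) = Σ v₍₂₎ ⊗ π(S(v₍₁₎))` maps `V = M ∩ ker ε` into `V ⊗ H` and makes
`V` a right `H`-comodule: `(Δ_V ⊗ id) ∘ Δ_V = (id ⊗ Δ_H) ∘ Δ_V` and `(id ⊗ ε_H) ∘ Δ_V = id`
on `V`. -/
theorem statement12 (π : P →ₐc[k] H) (hsurj : Function.Surjective π)
    (hS : ∀ x : P, π (HopfAlgebra.antipode (R := k) x)
      = HopfAlgebra.antipode (R := k) (π x)) :
    (∀ v ∈ Vsub π, deltaV π v ∈ LinearMap.range (LinearMap.rTensor H (Vsub π).subtype))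
    ∧ (∀ v ∈ Vsub π,
        (TensorProduct.assoc k P H H) ((deltaV π).rTensor H (deltaV π v))
          = (Coalgebra.comul (R := k) (A := H)).lTensor P (deltaV π v))
    ∧ (∀ v ∈ Vsub π,
        (TensorProduct.rid k P)
          ((Coalgebra.counit (R := k) (A := H)).lTensor P (deltaV π v)) = v) :=
  statement12_general π
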